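/- arXiv:2212.06887 — 5 statements merged into one kernel-verified Lean document; each statement's English description precedes it below -/
import Mathlib

section
/- Let $(a_n)$ be a sequence in a semigroup such that $FS(a_n)$ is infinite. Then there exists a bijective (injective) sequence $(b_n)$ with $FS(b_n) \subseteq FS(a_n)$; that is, every infinite set of the form $FS(a_n)$ is a proper IP set. -/
/-- The ordered sum `a_{i_1} + ⋯ + a_{i_m}` over a finite index set
`F = {i_1 < ⋯ < i_m}` (junk value `a 0` if `F = ∅`). -/
def ordsum {S : Type*} [AddSemigroup S] (a : ℕ → S) (F : Finset ℕ) : S :=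
  match F.sort (· ≤ ·) with
  | [] => a 0
  | i :: l => l.foldl (fun s j => s + a j) (a i)

/-- `F < G`: every element of `F` is smaller than every element of `G`. -/
def FinsetLT (F G : Finset ℕ) : Prop := ∀ i ∈ F, ∀ j ∈ G, i < j

/-- `FS(a_1, a_2, …)`: the set of all finite ordered sums of the sequence `a`. -/
def FSset {S : Type*} [AddSemigroup S] (a : ℕ → S) : Set S :=
  {s | ∃ F : Finset ℕ, F.Nonempty ∧ ordsum a F = s}

/-- `FS(a_n, a_{n+1}, …)`: finite ordered sums with all indices `≥ n`. -/
def FStail {S : Type*} [AddSemigroup S] (a : ℕ → S) (n : ℕ) : Set S :=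
  {s | ∃ F : Finset ℕ, F.Nonempty ∧ (∀ i ∈ F, n ≤ i) ∧ ordsum a F = s}

/-- A sequence is proper if `a_{F₁} ≠ a_{F₂}` whenever `F₁ < F₂`. -/
def IsProperSeq {S : Type*} [AddSemigroup S] (a : ℕ → S) : Prop :=
  ∀ F G : Finset ℕ, F.Nonempty → G.Nonempty → FinsetLT F G →
    ordsum a F ≠ ordsum a G

/-- `b` is a sumsequence of `a`: `b_k = a_{F_k}` for finite index sets `F₁ < F₂ < ⋯`. -/
def IsSumseq {S : Type*} [AddSemigroup S] (a b : ℕ → S) : Prop :=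
  ∃ F : ℕ → Finset ℕ, (∀ k, (F k).Nonempty) ∧
    (∀ k, FinsetLT (F k) (F (k + 1))) ∧ (∀ k, b k = ordsum a (F k))

/-!
Once `FS(a_n)` is infinite, so is every tail `FS(a_m : m ≥ n)`, because `FS(a_n)` is covered by
the finitely many sums over indices `< n`, the tail, and their pairwise sums. Hence one can pick
blocks `F₀ < F₁ < ⋯` of indices one after the other, each with a sum `a_{F_k}` different from
all earlier ones. The sequence `b_k = a_{F_k}` is injective, and every finite sum of the `b_k` is
the sum of `a` over a union of blocks, so `FS(b_n) ⊆ FS(a_n)`.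
-/

section

variable {S : Type*} [AddSemigroup S] (a : ℕ → S)

lemma foldl_add_init_add (s t : S) (l : List ℕ) :
    l.foldl (fun u j => u + a j) (s + t) = s + l.foldl (fun u j => u + a j) t := by
  induction l generalizing t with
  | nil => rfl
  | cons i l ih => simp only [List.foldl_cons, add_assoc, ih]

lemma ordsum_singleton (m : ℕ) : ordsum a {m} = a m := by
  unfold ordsum; rw [Finset.sort_singleton]; rfl

lemma ordsum_insert_of_forall_lt {m : ℕ} {F : Finset ℕ} (hF : F.Nonempty)
    (hm : ∀ i ∈ F, m < i) :
    ordsum a (insert m F) = a m + ordsum a F := by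
  obtain ⟨i, l, hil⟩ : ∃ i l, F.sort (· ≤ ·) = i :: l :=
    List.exists_cons_of_ne_nil (by simpa [← List.length_pos_iff] using hF.card_pos)
  have hsort : (insert m F).sort (· ≤ ·) = m :: i :: l := by
    rw [Finset.sort_insert _ (fun j hj => (hm j hj).le) fun hmF => (hm m hmF).false, hil]
  unfold ordsum
  rw [hsort, hil]
  exact foldl_add_init_add a (a m) (a i) l

lemma ordsum_union_of_lt {F G : Finset ℕ} (hF : F.Nonempty) (hG : G.Nonempty)
    (hFG : FinsetLT F G) :
    ordsum a (F ∪ G) = ordsum a F + ordsum a G := by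
  induction F using Finset.induction_on_min with
  | empty => exact absurd hF Finset.not_nonempty_empty
  | insert m F hm ih =>
    have hmFG : ∀ j ∈ F ∪ G, m < j := by
      intro j hj
      rcases Finset.mem_union.1 hj with hj | hj
      exacts [hm j hj, hFG m (Finset.mem_insert_self m F) j hj]
    rw [Finset.insert_union, ordsum_insert_of_forall_lt a (hG.mono Finset.subset_union_right) hmFG]
    rcases F.eq_empty_or_nonempty with rfl | hF'
    · rw [Finset.empty_union, insert_empty_eq, ordsum_singleton]
    · rw [ih hF' fun i hi j hj => hFG i (Finset.mem_insert_of_mem hi) j hj,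
        ordsum_insert_of_forall_lt a hF' hm, add_assoc]

lemma ordsum_biUnion_of_lt {F : ℕ → Finset ℕ} (hne : ∀ k, (F k).Nonempty)
    (hlt : ∀ k l, k < l → FinsetLT (F k) (F l)) {G : Finset ℕ} (hG : G.Nonempty) :
    ordsum (fun k => ordsum a (F k)) G = ordsum a (G.biUnion F) := by
  induction G using Finset.induction_on_max with
  | empty => exact absurd hG Finset.not_nonempty_empty
  | insert m G hm ih =>
    rcases G.eq_empty_or_nonempty with rfl | hG'
    · rw [insert_empty_eq, ordsum_singleton, Finset.singleton_biUnion]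
    · have hGm : FinsetLT G {m} := fun k hk l hl => Finset.mem_singleton.1 hl ▸ hm k hk
      have hblocks : FinsetLT (G.biUnion F) (F m) := by
        intro i hi j hj
        obtain ⟨k, hk, hik⟩ := Finset.mem_biUnion.1 hi
        exact hlt k m (hm k hk) i hik j hj
      rw [Finset.biUnion_insert, Finset.union_comm,
        ordsum_union_of_lt a (hG'.biUnion fun k _ => hne k) (hne m) hblocks, ← ih hG',
        ← Finset.union_singleton, ordsum_union_of_lt _ hG' (Finset.singleton_nonempty m) hGm,
        ordsum_singleton]

lemma FSset_subset_of_blocks {F : ℕ → Finset ℕ} (hne : ∀ k, (F k).Nonempty)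
    (hlt : ∀ k l, k < l → FinsetLT (F k) (F l)) :
    FSset (fun k => ordsum a (F k)) ⊆ FSset a := by
  rintro s ⟨G, hG, rfl⟩
  exact ⟨G.biUnion F, hG.biUnion fun k _ => hne k, (ordsum_biUnion_of_lt a hne hlt hG).symm⟩

lemma FSset_subset_head_union_FStail (n : ℕ) :
    FSset a ⊆ (ordsum a '' ↑(Finset.range n).powerset) ∪ FStail a n ∪
      Set.image2 (· + ·) (ordsum a '' ↑(Finset.range n).powerset) (FStail a n) := by
  rintro s ⟨F, hF, rfl⟩
  set head := F.filter (· < n)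
  set tail := F.filter (¬ · < n)
  have hsplit : head ∪ tail = F := Finset.filter_union_filter_not_eq _ F
  have hhead : head ∈ (Finset.range n).powerset :=
    Finset.mem_powerset.2 fun i hi => Finset.mem_range.2 (Finset.mem_filter.1 hi).2
  have htail : ∀ i ∈ tail, n ≤ i := fun i hi => not_lt.1 (Finset.mem_filter.1 hi).2
  rcases head.eq_empty_or_nonempty with hh | hh
  · rw [← hsplit, hh, Finset.empty_union] at hF ⊢
    exact Or.inl (Or.inr ⟨tail, hF, htail, rfl⟩)
  rcases tail.eq_empty_or_nonempty with ht | ht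
  · rw [← hsplit, ht, Finset.union_empty]
    exact Or.inl (Or.inl ⟨head, hhead, rfl⟩)
  have hlt : FinsetLT head tail := fun i hi j hj =>
    lt_of_lt_of_le (Finset.mem_filter.1 hi).2 (htail j hj)
  rw [← hsplit, ordsum_union_of_lt a hh ht hlt]
  exact Or.inr ⟨_, ⟨head, hhead, rfl⟩, _, ⟨tail, ht, htail, rfl⟩, rfl⟩

lemma FStail_infinite (h : (FSset a).Infinite) (n : ℕ) : (FStail a n).Infinite := by
  intro htail
  have hhead : (ordsum a '' ↑(Finset.range n).powerset).Finite :=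
    (Finset.finite_toSet _).image _
  exact h (((hhead.union htail).union (hhead.image2 _ htail)).subset
    (FSset_subset_head_union_FStail a n))

lemma exists_block_after (h : (FSset a).Infinite) (s : Finset (Finset ℕ)) :
    ∃ G : Finset ℕ, G.Nonempty ∧ ∀ F ∈ s, FinsetLT F G ∧ ordsum a F ≠ ordsum a G := by
  set n := s.sup (fun F => F.sup id) + 1
  obtain ⟨_, ⟨G, hG, hGn, rfl⟩, hnew⟩ :=
    ((FStail_infinite a h n).sdiff (s.finite_toSet.image (ordsum a))).nonempty
  refine ⟨G, hG, fun F hF => ⟨fun i hi j hj => ?_, fun heq => hnew ⟨F, hF, heq⟩⟩⟩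
  have hiF : i ≤ F.sup id := Finset.le_sup (f := id) hi
  have hFs : F.sup id ≤ s.sup (fun F => F.sup id) := Finset.le_sup (f := fun F => F.sup id) hF
  have hjn := hGn j hj
  omega

end

theorem stmt1 {S : Type*} [AddSemigroup S] (a : ℕ → S) (h : (FSset a).Infinite) :
    ∃ b : ℕ → S, Function.Injective b ∧ FSset b ⊆ FSset a := by
  obtain ⟨F, hne, hF⟩ := exists_seq_of_forall_finset_exists (fun G : Finset ℕ => G.Nonempty)
    (fun F G => FinsetLT F G ∧ ordsum a F ≠ ordsum a G) fun s _ => exists_block_after a h s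
  exact ⟨fun k => ordsum a (F k), Function.Injective.of_lt_imp_ne fun k l hkl => (hF k l hkl).2,
    FSset_subset_of_blocks a hne fun k l hkl => (hF k l hkl).1⟩
end

section
/- Every injective sequence in a group has a proper subsequence, i.e., a subsequence $(b_n)$ such that for all finite index sets $F_1 < F_2$ (every element of $F_1$ less than every element of $F_2$), we have $b_{F_1} \neq b_{F_2}$. -/
open Filter Finset
open scoped Pointwise

section OrdSum

variable {S : Type*}

lemma ordsum_singleton_s2 [AddSemigroup S] (f : ℕ → S) (i : ℕ) : ordsum f {i} = f i := by
  simp [ordsum]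

variable [AddMonoid S]

lemma List.foldl_add_apply_eq_add_sum (f : ℕ → S) (x : S) (l : List ℕ) :
    l.foldl (fun s j => s + f j) x = x + (l.map f).sum := by
  induction l generalizing x with
  | nil => simp
  | cons i l ih => simp [ih, add_assoc]

lemma ordsum_eq_sum_map_sort (f : ℕ → S) {F : Finset ℕ} (hF : F.Nonempty) :
    ordsum f F = ((F.sort (· ≤ ·)).map f).sum := by
  rw [ordsum]
  split
  · next h =>
    have hlen := length_sort (· ≤ ·) (s := F)
    rw [h] at hlen
    exact absurd hlen.symm hF.card_pos.ne'
  · next i l h => rw [h, List.foldl_add_apply_eq_add_sum, List.map_cons, List.sum_cons]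

lemma sort_union_of_finsetLT {F H : Finset ℕ} (h : FinsetLT F H) :
    (F ∪ H).sort (· ≤ ·) = F.sort (· ≤ ·) ++ H.sort (· ≤ ·) := by
  have hpair : (F.sort (· ≤ ·) ++ H.sort (· ≤ ·)).Pairwise (· ≤ ·) :=
    List.pairwise_append.2 ⟨pairwise_sort _ _, pairwise_sort _ _,
      fun i hi j hj => (h i ((mem_sort _).1 hi) j ((mem_sort _).1 hj)).le⟩
  have hnodup : (F.sort (· ≤ ·) ++ H.sort (· ≤ ·)).Nodup :=
    List.nodup_append.2 ⟨sort_nodup _ _, sort_nodup _ _,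
      fun i hi j hj => (h i ((mem_sort _).1 hi) j ((mem_sort _).1 hj)).ne⟩
  simpa using (List.toFinset_sort (· ≤ ·) hnodup).2 hpair

lemma ordsum_union {f : ℕ → S} {F H : Finset ℕ} (hF : F.Nonempty) (hH : H.Nonempty)
    (h : FinsetLT F H) : ordsum f (F ∪ H) = ordsum f F + ordsum f H := by
  rw [ordsum_eq_sum_map_sort f (hF.mono subset_union_left), ordsum_eq_sum_map_sort f hF,
    ordsum_eq_sum_map_sort f hH, sort_union_of_finsetLT h, List.map_append, List.sum_append]

lemma ordsum_comp_of_strictMono (f : ℕ → S) {φ : ℕ → ℕ} (hφ : StrictMono φ) {F : Finset ℕ}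
    (hF : F.Nonempty) : ordsum (f ∘ φ) F = ordsum f (F.image φ) := by
  have hsort : (F.image φ).sort (· ≤ ·) = (F.sort (· ≤ ·)).map φ := by
    simpa [map_eq_image] using
      ((hφ.strictMonoOn F).map_finsetSort (f := ⟨φ, hφ.injective⟩)).symm
  rw [ordsum_eq_sum_map_sort _ hF, ordsum_eq_sum_map_sort _ (hF.image φ), hsort, List.map_map]

end OrdSum

theorem exists_strictMono_forall_image_range {P : Finset ℕ → ℕ → Prop}
    (h : ∀ T, ∃ᶠ m in atTop, P T m) :
    ∃ φ : ℕ → ℕ, StrictMono φ ∧ ∀ k, P ((range k).image φ) (φ k) := by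
  simp only [frequently_atTop'] at h
  choose next hnext_gt hnext using fun T : Finset ℕ => h T (T.sup id)
  let chosen : ℕ → Finset ℕ := fun k => Nat.rec ∅ (fun _ T => insert (next T) T) k
  have hchosen : ∀ k, chosen k = (range k).image (next ∘ chosen) := by
    intro k
    induction k with
    | zero => rfl
    | succ k ih =>
      rw [range_add_one, image_insert, ← ih]
      rfl
  refine ⟨next ∘ chosen, strictMono_nat_of_lt_succ fun k => ?_, fun k => hchosen k ▸ hnext _⟩
  have hmem : next (chosen k) ∈ chosen (k + 1) := mem_insert_self _ _
  exact (le_sup (f := id) hmem).trans_lt (hnext_gt _)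

section Forbidden

variable {S : Type*}

def ordsumsWithin [AddSemigroup S] (a : ℕ → S) (T : Finset ℕ) : Set S :=
  ordsum a '' {F | F ⊆ T ∧ F.Nonempty}

def forbiddenValues [AddGroup S] (a : ℕ → S) (T : Finset ℕ) : Set S :=
  ordsumsWithin a T ∪ (-ordsumsWithin a T + ordsumsWithin a T)

lemma finite_ordsumsWithin [AddSemigroup S] (a : ℕ → S) (T : Finset ℕ) :
    (ordsumsWithin a T).Finite :=
  (T.powerset.finite_toSet.subset fun _ hF => mem_powerset.2 hF.1).image _

lemma finite_forbiddenValues [AddGroup S] (a : ℕ → S) (T : Finset ℕ) :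
    (forbiddenValues a T).Finite :=
  have hfin := finite_ordsumsWithin a T
  hfin.union (hfin.neg.add hfin)

lemma ordsum_comp_mem_ordsumsWithin [AddMonoid S] (a : ℕ → S) {φ : ℕ → ℕ}
    (hφ : StrictMono φ) {F : Finset ℕ} {k : ℕ} (hF : F.Nonempty) (hFk : ∀ i ∈ F, i < k) :
    ordsum (a ∘ φ) F ∈ ordsumsWithin a ((range k).image φ) :=
  ⟨F.image φ, ⟨image_subset_image fun i hi => mem_range.2 (hFk i hi), hF.image φ⟩,
    (ordsum_comp_of_strictMono a hφ hF).symm⟩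

lemma apply_max'_mem_forbiddenValues_of_ordsum_eq [AddGroup S] (a : ℕ → S) {φ : ℕ → ℕ}
    (hφ : StrictMono φ) {F H : Finset ℕ} (hF : F.Nonempty) (hH : H.Nonempty)
    (hFH : FinsetLT F H) (heq : ordsum (a ∘ φ) F = ordsum (a ∘ φ) H) :
    a (φ (H.max' hH)) ∈ forbiddenValues a ((range (H.max' hH)).image φ) := by
  set M := H.max' hH
  have hFW := ordsum_comp_mem_ordsumsWithin a hφ hF fun i hi => hFH i hi M (H.max'_mem hH)
  rcases (H.erase M).eq_empty_or_nonempty with hH' | hH'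
  · have hHM : H = {M} := ((erase_eq_empty_iff H M).1 hH').resolve_left hH.ne_empty
    rw [hHM, ordsum_singleton_s2] at heq
    rw [heq] at hFW
    exact Or.inl hFW
  · have hlt : FinsetLT (H.erase M) {M} := fun i hi j hj =>
      mem_singleton.1 hj ▸ H.lt_max'_of_mem_erase_max' hH hi
    have hsplit : ordsum (a ∘ φ) H = ordsum (a ∘ φ) (H.erase M) + (a ∘ φ) M := by
      rw [← ordsum_singleton_s2 (a ∘ φ) M, ← ordsum_union hH' (singleton_nonempty M) hlt,
        erase_union_eq M H (H.max'_mem hH)]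
    have hM : a (φ M) = -ordsum (a ∘ φ) (H.erase M) + ordsum (a ∘ φ) F := by
      rw [heq, hsplit, neg_add_cancel_left, Function.comp_apply]
    refine Or.inr (hM ▸ Set.add_mem_add (Set.neg_mem_neg.2 ?_) hFW)
    exact ordsum_comp_mem_ordsumsWithin a hφ hH' fun i hi => H.lt_max'_of_mem_erase_max' hH hi

end Forbidden

theorem stmt2 {G : Type*} [AddGroup G] (a : ℕ → G) (ha : Function.Injective a) :
    ∃ φ : ℕ → ℕ, StrictMono φ ∧ IsProperSeq (a ∘ φ) := by
  have havoid : ∀ T, ∃ᶠ m in atTop, a m ∉ forbiddenValues a T := fun T =>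
    (Nat.cofinite_eq_atTop ▸ ((finite_forbiddenValues a T).preimage
      ha.injOn).eventually_cofinite_notMem).frequently
  obtain ⟨φ, hφ, hgood⟩ := exists_strictMono_forall_image_range havoid
  exact ⟨φ, hφ, fun F H hF hH hFH heq =>
    hgood _ (apply_max'_mem_forbiddenValues_of_ordsum_eq a hφ hF hH hFH heq)⟩
end

section
/- A sequence $(a_n)$ in a semigroup has a proper sumsequence if and only if it has a sumsequence $(b_n)$ such that $\bigcap_{n=1}^{\infty} FS(b_n, b_{n+1}, \dots) = \emptyset$. -/
/-!
A proper sequence has empty tail intersection: a common element of `FS(b_0, …)` and of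
`FS(b_{max F + 1}, …)` would be a sum `b_F = b_G` with `F < G`. Conversely, if the tail
intersection is empty, each of the finitely many sums over indices `≤ m` leaves `FS(b_n, …)` for
large `n`; passing to a sparse subsequence `b ∘ f` in which every sum over indices `≤ f k` avoids
`FS(b_{f (k+1)}, …)` makes `b ∘ f` proper, and a subsequence of a sumsequence is a sumsequence.
-/

open Filter

section Sequences

variable {S : Type*} [AddSemigroup S]

lemma ordsum_comp_of_strictMono_s3 (b : ℕ → S) {f : ℕ → ℕ} (hf : StrictMono f) {G : Finset ℕ}
    (hG : G.Nonempty) : ordsum (b ∘ f) G = ordsum b (G.map ⟨f, hf.injective⟩) := by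
  unfold ordsum
  rw [← (hf.strictMonoOn G).map_finsetSort ⟨f, hf.injective⟩]
  rcases h : G.sort (· ≤ ·) with _ | ⟨i, l⟩
  · have hcard := G.length_sort (· ≤ ·)
    rw [h, List.length_nil, eq_comm, Finset.card_eq_zero] at hcard
    exact absurd hcard hG.ne_empty
  · simp [List.foldl_map]

lemma FStail_antitone (b : ℕ → S) : Antitone (FStail b) :=
  fun _ _ hnm _ ⟨F, hne, hge, hsum⟩ => ⟨F, hne, fun i hi => hnm.trans (hge i hi), hsum⟩

lemma finsetLT_of_lt {H : ℕ → Finset ℕ} (hne : ∀ k, (H k).Nonempty)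
    (hsucc : ∀ k, FinsetLT (H k) (H (k + 1))) {k l : ℕ} (hkl : k < l) :
    FinsetLT (H k) (H l) := by
  induction l, hkl using Nat.le_induction with
  | base => exact hsucc k
  | succ l _ ih =>
    intro i hi j hj
    obtain ⟨t, ht⟩ := hne l
    exact (ih i hi t ht).trans (hsucc l t ht j hj)

lemma IsSumseq.comp_strictMono {a b : ℕ → S} (hb : IsSumseq a b) {f : ℕ → ℕ}
    (hf : StrictMono f) : IsSumseq a (b ∘ f) := by
  obtain ⟨H, hne, hsucc, hsum⟩ := hb
  exact ⟨H ∘ f, fun k => hne _, fun k => finsetLT_of_lt hne hsucc (hf k.lt_succ_self),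
    fun k => hsum _⟩

lemma IsProperSeq.iInter_FStail_eq_empty {b : ℕ → S} (hb : IsProperSeq b) :
    ⋂ n, FStail b n = ∅ := by
  refine Set.eq_empty_iff_forall_notMem.2 fun s hs => ?_
  rw [Set.mem_iInter] at hs
  obtain ⟨F, hF, -, rfl⟩ := hs 0
  obtain ⟨G, hG, hGge, hFG⟩ := hs (F.max' hF + 1)
  exact hb F G hF hG (fun i hi j hj => (F.le_max' i hi).trans_lt (hGge j hj)) hFG.symm

lemma eventually_forall_ordsum_notMem_FStail {b : ℕ → S} (hb : ⋂ n, FStail b n = ∅) (m : ℕ) :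
    ∀ᶠ n in atTop, ∀ F ∈ (Finset.range m).powerset, ordsum b F ∉ FStail b n := by
  refine (eventually_all_finset _).2 fun F _ => ?_
  have hF : ordsum b F ∉ ⋂ n, FStail b n := hb ▸ Set.notMem_empty _
  obtain ⟨n, hn⟩ := Set.mem_iInter.not.1 hF |> not_forall.1
  exact eventually_atTop.2 ⟨n, fun n' hn' h => hn (FStail_antitone b hn' h)⟩

lemma isProperSeq_comp_of_sparse {b : ℕ → S} {f : ℕ → ℕ} (hf : StrictMono f)
    (hsparse : ∀ k, ∀ F ⊆ Finset.range (f k + 1), ordsum b F ∉ FStail b (f (k + 1))) :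
    IsProperSeq (b ∘ f) := by
  intro G₁ G₂ hG₁ hG₂ hlt heq
  set k := G₁.max' hG₁
  rw [ordsum_comp_of_strictMono_s3 b hf hG₁, ordsum_comp_of_strictMono_s3 b hf hG₂] at heq
  have hsub : G₁.map ⟨f, hf.injective⟩ ⊆ Finset.range (f k + 1) := by
    simp only [Finset.subset_iff, Finset.mem_map, Function.Embedding.coeFn_mk,
      Finset.mem_range, forall_exists_index, and_imp]
    rintro _ i hi rfl
    exact Nat.lt_succ_of_le (hf.monotone (G₁.le_max' i hi))
  refine hsparse k _ hsub (heq ▸ ⟨_, Finset.map_nonempty.2 hG₂, ?_, rfl⟩)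
  simp only [Finset.mem_map, Function.Embedding.coeFn_mk, forall_exists_index, and_imp]
  rintro _ j hj rfl
  exact hf.monotone (hlt k (G₁.max'_mem hG₁) j hj)

lemma exists_strictMono_isProperSeq_comp {b : ℕ → S} (hb : ⋂ n, FStail b n = ∅) :
    ∃ f : ℕ → ℕ, StrictMono f ∧ IsProperSeq (b ∘ f) := by
  have hnext : ∀ m, ∃ m', m < m' ∧
      ∀ F ∈ (Finset.range (m + 1)).powerset, ordsum b F ∉ FStail b m' := fun m =>
    ((eventually_gt_atTop m).and (eventually_forall_ordsum_notMem_FStail hb (m + 1))).exists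
  choose g hlt hg using hnext
  have hf : StrictMono (fun k => g^[k] 0) := strictMono_nat_of_lt_succ fun k => by
    simpa only [Function.iterate_succ_apply'] using hlt _
  refine ⟨_, hf, isProperSeq_comp_of_sparse hf fun k F hF => ?_⟩
  simpa only [Function.iterate_succ_apply'] using hg _ F (Finset.mem_powerset.2 hF)

end Sequences

theorem stmt3 {S : Type*} [AddSemigroup S] (a : ℕ → S) :
    (∃ b : ℕ → S, IsSumseq a b ∧ IsProperSeq b) ↔
      (∃ b : ℕ → S, IsSumseq a b ∧ (⋂ n : ℕ, FStail b n) = ∅) := by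
  constructor
  · rintro ⟨b, hab, hb⟩
    exact ⟨b, hab, hb.iInter_FStail_eq_empty⟩
  · rintro ⟨b, hab, hb⟩
    obtain ⟨f, hf, hproper⟩ := exists_strictMono_isProperSeq_comp hb
    exact ⟨b ∘ f, hab.comp_strictMono hf, hproper⟩
end

section
/- Let $(a_n)$ be an injective sequence in a semigroup with no proper sumsequence and let $A_\infty := \bigcap_{n} FS(a_n, a_{n+1}, \dots)$. Then every sequence $(b_n)$ of elements of $A_\infty$ is a sumsequence of $(a_n)$: there exist finite index sets $F_1 < F_2 < \dots$ with $b_k = a_{F_k}$ for all $k$. -/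
theorem stmt5 {S : Type*} [AddSemigroup S] (a : ℕ → S) (ha : Function.Injective a)
    (hnp : ¬ ∃ b : ℕ → S, IsSumseq a b ∧ IsProperSeq b)
    (b : ℕ → S) (hb : ∀ k, b k ∈ (⋂ n : ℕ, FStail a n)) :
    IsSumseq a b := by
  have h : ∀ k n, ∃ F : Finset ℕ, F.Nonempty ∧ (∀ i ∈ F, n ≤ i) ∧ ordsum a F = b k := by
    intro k n
    have := hb k
    simp only [Set.mem_iInter] at this
    exact this n
  choose g h1 h2 h3 using h
  set F : ℕ → Finset ℕ :=
    fun k => Nat.rec (g 0 0) (fun k Fk => g (k + 1) (Fk.sup id + 1)) k with hF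
  refine ⟨F, fun k => ?_, fun k => ?_, fun k => ?_⟩
  · cases k <;> exact h1 _ _
  · intro i hi j hj
    have hj' : (F k).sup id + 1 ≤ j := h2 (k + 1) ((F k).sup id + 1) j hj
    have hi' : i ≤ (F k).sup id := Finset.le_sup (f := id) hi
    omega
  · cases k <;> exact (h3 _ _).symm
end

section
/- In the fan semilattice $S = (\mathbb{N}_{\ge 1}, \wedge)$ with $m \wedge n := 1$ for distinct $m, n$ and $n \wedge n := n$, $S$ itself is a proper IP set, but no subset of $\mathbb{N}_{\ge 2}$ is an IP set witnessed by a sequence with two distinct values, and hence proper IP sets in $S$ are not partition regular (with respect to the partition $\{\{1\}, \mathbb{N}_{\ge 2}\}$). -/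
/-- A proper IP set: contains `FS(b)` for an injective sequence `b`. -/
def IsProperIP {S : Type*} [AddSemigroup S] (A : Set S) : Prop :=
  ∃ b : ℕ → S, Function.Injective b ∧ FSset b ⊆ A

/-- Partition regularity of the family of proper IP sets of `S`. -/
def ProperIPPartReg (S : Type*) [AddSemigroup S] : Prop :=
  ∀ A : Set S, IsProperIP A → ∀ (k : ℕ) (c : S → Fin k),
    ∃ i : Fin k, IsProperIP {s ∈ A | c s = i}

/-- `FS(b_0, …, b_{n-1})`: ordered sums over nonempty `F ⊆ {0, …, n-1}`. -/
def FSfin {S : Type*} [AddSemigroup S] (a : ℕ → S) (n : ℕ) : Set S :=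
  {s | ∃ F : Finset ℕ, F.Nonempty ∧ F ⊆ Finset.range n ∧ ordsum a F = s}

/-- `FS_{≥2}(a)`: ordered sums with at least two summands. -/
def FS2set {S : Type*} [AddSemigroup S] (a : ℕ → S) : Set S :=
  {s | ∃ F : Finset ℕ, 2 ≤ F.card ∧ ordsum a F = s}

/-- The fan semilattice: positive integers with `m + n = 1` for `m ≠ n`, `n + n = n`. -/
def Fan : Type := {n : ℕ // 1 ≤ n}

instance : DecidableEq Fan := fun a b => decidable_of_iff (a.val = b.val) Subtype.ext_iff.symm

def fanAdd (m n : Fan) : Fan := if m = n then n else ⟨1, le_refl 1⟩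

theorem fanAdd_assoc (a b c : Fan) : fanAdd (fanAdd a b) c = fanAdd a (fanAdd b c) := by
  unfold fanAdd
  grind

instance : AddSemigroup Fan where
  add := fanAdd
  add_assoc := fanAdd_assoc

theorem ordsum_single {S : Type*} [AddSemigroup S] (a : ℕ → S) (i : ℕ) :
    ordsum a {i} = a i := by
  unfold ordsum
  rw [Finset.sort_singleton]
  rfl

theorem ordsum_pair {S : Type*} [AddSemigroup S] (a : ℕ → S) {i j : ℕ} (h : i < j) :
    ordsum a {i, j} = a i + a j := by
  unfold ordsum
  have h1 : ({i, j} : Finset ℕ) = insert i {j} := rfl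
  rw [h1, Finset.sort_insert]
  · rw [Finset.sort_singleton]
    rfl
  · intro b hb
    simp at hb
    omega
  · simp
    omega

theorem fan_const (a : ℕ → Fan) (h : FSset a ⊆ {x : Fan | 2 ≤ x.val}) :
    ∀ i j : ℕ, a i = a j := by
  intro i j
  by_contra hne
  have hij : i ≠ j := fun e => hne (e ▸ rfl)
  rcases lt_or_gt_of_ne hij with hlt | hlt
  case _ =>
    have : ordsum a {i, j} ∈ FSset a := ⟨{i, j}, ⟨i, by simp⟩, rfl⟩
    have h2 := h this
    rw [ordsum_pair a hlt] at h2
    have : a i + a j = (⟨1, le_refl 1⟩ : Fan) := by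
      show fanAdd (a i) (a j) = _
      unfold fanAdd
      exact if_neg hne
    rw [this] at h2
    exact absurd (show 2 ≤ 1 from h2) (by norm_num)
  case _ =>
    have : ordsum a {j, i} ∈ FSset a := ⟨{j, i}, ⟨j, by simp⟩, rfl⟩
    have h2 := h this
    rw [ordsum_pair a hlt] at h2
    have : a j + a i = (⟨1, le_refl 1⟩ : Fan) := by
      show fanAdd (a j) (a i) = _
      unfold fanAdd
      exact if_neg (Ne.symm hne)
    rw [this] at h2
    exact absurd (show 2 ≤ 1 from h2) (by norm_num)

theorem stmt7 :
    IsProperIP (Set.univ : Set Fan) ∧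
    (∀ a : ℕ → Fan, FSset a ⊆ {x : Fan | 2 ≤ x.val} → ∀ i j : ℕ, a i = a j) ∧
    ¬ ProperIPPartReg Fan := by
  have hc : ∀ a : ℕ → Fan, FSset a ⊆ {x : Fan | 2 ≤ x.val} → ∀ i j : ℕ, a i = a j := fan_const
  have h1 : IsProperIP (Set.univ : Set Fan) := by
    refine ⟨fun k => ⟨k + 1, Nat.le_add_left 1 k⟩, ?_, fun _ _ => trivial⟩
    intro x y hxy
    simpa using congrArg Subtype.val hxy
  refine ⟨h1, hc, ?_⟩
  intro hpr
  obtain ⟨i, bi, hbi, hsub⟩ := hpr Set.univ h1 2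
    (fun x => if x.val = 1 then 0 else 1)
  have hmem : ∀ k, bi k ∈ {s ∈ (Set.univ : Set Fan) |
      (if s.val = 1 then (0 : Fin 2) else 1) = i} := by
    intro k
    apply hsub
    exact ⟨{k}, ⟨k, by simp⟩, ordsum_single bi k⟩
  have h01 : bi 0 ≠ bi 1 := fun e => absurd (hbi e) (by simp)
  fin_cases i
  · -- part 0: all values are 1
    have hv : ∀ k, (bi k).val = 1 := by
      intro k
      have := (hmem k).2
      by_contra hne
      rw [if_neg hne] at this
      exact absurd this (by decide)
    exact h01 (Subtype.ext ((hv 0).trans (hv 1).symm))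
  · -- part 1: all values ≥ 2
    have hsub2 : FSset bi ⊆ {x : Fan | 2 ≤ x.val} := by
      intro x hx
      have := (hsub hx).2
      simp only [Set.mem_setOf_eq]
      by_contra hlt
      push_neg at hlt
      have hx1 : x.val = 1 := le_antisymm (by omega) x.2
      rw [if_pos hx1] at this
      exact absurd this (by decide)
    exact h01 (hc bi hsub2 0 1)
end
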